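/- Let M^O, M^L, M^R be d×d complex matrices with M^R M^L = 0, M^L M^L = 0, and M^R M^R = 0, and suppose there exists a d×d complex matrix X such that [X, M^O] = F^O, M^O [X, M^L] M^O = M^O F^L M^O, M^O [X, M^L] M^R = M^O F^L M^R, M^O [X, M^R] M^O = M^O F^R M^O, and M^L [X, M^R] M^O = M^L F^R M^O. Then for every n > 3 and every PPXPP-allowed cyclic word s : ZMod n → {O, L, R}, the sum of all cyclic insertion amplitudes vanishes: Σ_{k ∈ ZMod n} Tr(F^{s_k} · M^{s_{k+1}} ⋯ M^{s_{k+n−1}}) = 0. -/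
import Mathlib


open Matrix

/-- The blocked three-letter alphabet `{O, L, R}`. -/
inductive Blk | O | L | R
deriving DecidableEq

/-- The defect matrices: `F^O = M^L + M^R`, `F^L = F^R = M^O`. -/
def Fdef {d : ℕ} (M : Blk → Matrix (Fin d) (Fin d) ℂ) : Blk → Matrix (Fin d) (Fin d) ℂ
  | .O => M .L + M .R
  | .L => M .O
  | .R => M .O

private lemma prod_ofFn_first {α} [Monoid α] {p : ℕ} (f : Fin (p+1) → α) :
    (List.ofFn f).prod = f 0 * (List.ofFn fun j : Fin p => f j.succ).prod := by
  rw [List.ofFn_succ, List.prod_cons]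

private lemma prod_ofFn_last {α} [Monoid α] {p : ℕ} (f : Fin (p+1) → α) :
    (List.ofFn f).prod
      = (List.ofFn fun j : Fin p => f j.castSucc).prod * f (Fin.last p) := by
  rw [List.ofFn_succ', List.concat_eq_append, List.prod_append, List.prod_cons,
    List.prod_nil, mul_one]

private lemma sandwich_trace {d : ℕ} (C F G A U : Matrix (Fin d) (Fin d) ℂ)
    (h : C * F * A = C * G * A) :
    Matrix.trace (F * (A * (U * C))) = Matrix.trace (G * (A * (U * C))) := by
  have key : C * (F * (A * U)) = C * (G * (A * U)) := by
    calc C * (F * (A * U)) = (C * F * A) * U := by noncomm_ring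
      _ = (C * G * A) * U := by rw [h]
      _ = C * (G * (A * U)) := by noncomm_ring
  calc Matrix.trace (F * (A * (U * C)))
      = Matrix.trace ((F * (A * U)) * C) := by rw [show F * (A * (U * C)) = (F * (A * U)) * C by noncomm_ring]
    _ = Matrix.trace (C * (F * (A * U))) := Matrix.trace_mul_comm _ _
    _ = Matrix.trace (C * (G * (A * U))) := by rw [key]
    _ = Matrix.trace ((G * (A * U)) * C) := Matrix.trace_mul_comm _ _
    _ = Matrix.trace (G * (A * (U * C))) := by rw [show G * (A * (U * C)) = (G * (A * U)) * C by noncomm_ring]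

/-- Corollary 6, PPXPP model: under the padded commutator
conditions, the sum of all cyclic insertion amplitudes vanishes for every
PPXPP-allowed cyclic word of length `n > 3`. -/
theorem cyclic_insertion_sum_eq_zero_PPXPP
    (d : ℕ) (hd : 1 ≤ d)
    (M : Blk → Matrix (Fin d) (Fin d) ℂ)
    (hRL : M .R * M .L = 0) (hLL : M .L * M .L = 0) (hRR : M .R * M .R = 0)
    (X : Matrix (Fin d) (Fin d) ℂ)
    (h1 : X * M .O - M .O * X = Fdef M .O)
    (h2 : M .O * (X * M .L - M .L * X) * M .O = M .O * Fdef M .L * M .O)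
    (h3 : M .O * (X * M .L - M .L * X) * M .R = M .O * Fdef M .L * M .R)
    (h4 : M .O * (X * M .R - M .R * X) * M .O = M .O * Fdef M .R * M .O)
    (h5 : M .L * (X * M .R - M .R * X) * M .O = M .L * Fdef M .R * M .O)
    (n : ℕ) [NeZero n] (hn : 3 < n)
    (s : ZMod n → Blk)
    (hallow : ¬ ∃ k : ZMod n,
      (s k = Blk.R ∧ s (k + 1) = Blk.L) ∨
      (s k = Blk.L ∧ s (k + 1) = Blk.L) ∨
      (s k = Blk.R ∧ s (k + 1) = Blk.R)) :
    ∑ k : ZMod n,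
      Matrix.trace (Fdef M (s k) *
        (List.ofFn fun j : Fin (n - 1) =>
          M (s (k + 1 + ((j : ℕ) : ZMod n)))).prod) = 0 := by
  clear hd hRL hLL hRR
  push_neg at hallow
  obtain ⟨m, rfl⟩ : ∃ m, n = m + 4 := ⟨n - 4, by omega⟩
  clear hn
  have h0 : ((m : ℕ) : ZMod (m+4)) + 4 = 0 := by
    have := ZMod.natCast_self (m+4)
    push_cast at this
    linear_combination this
  -- abbreviations
  set rest : ZMod (m+4) → Matrix (Fin d) (Fin d) ℂ := fun k =>
    (List.ofFn fun j : Fin (m+3) => M (s (k + 1 + ((j : ℕ) : ZMod (m+4))))).prod with hrest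
  set T : ZMod (m+4) → Matrix (Fin d) (Fin d) ℂ := fun k =>
    (List.ofFn fun j : Fin (m+2) => M (s (k + 2 + ((j : ℕ) : ZMod (m+4))))).prod with hTdef
  set Umid : ZMod (m+4) → Matrix (Fin d) (Fin d) ℂ := fun k =>
    (List.ofFn fun j : Fin (m+1) => M (s (k + 2 + ((j : ℕ) : ZMod (m+4))))).prod with hUdef
  have hrf : ∀ k, rest k = M (s (k+1)) * T k := by
    intro k
    show (List.ofFn fun j : Fin (m+3) => M (s (k + 1 + ((j : ℕ) : ZMod (m+4))))).prod = _ * (List.ofFn fun j : Fin (m+2) => M (s (k + 2 + ((j : ℕ) : ZMod (m+4))))).prod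
    rw [prod_ofFn_first]
    congr 1
    · norm_num
    · apply congrArg List.prod
      rw [List.ofFn_inj]
      funext j
      exact congrArg M (congrArg s (by push_cast [Fin.val_succ]; ring))
  have hT : ∀ k, T k = Umid k * M (s (k - 1)) := by
    intro k
    show (List.ofFn fun j : Fin (m+2) => M (s (k + 2 + ((j : ℕ) : ZMod (m+4))))).prod = (List.ofFn fun j : Fin (m+1) => M (s (k + 2 + ((j : ℕ) : ZMod (m+4))))).prod * _
    rw [prod_ofFn_last]
    congr 1
    exact congrArg M (congrArg s (by push_cast [Fin.val_last]; linear_combination h0))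
  have hr2 : ∀ k, rest (k+1) = T k * M (s k) := by
    intro k
    show (List.ofFn fun j : Fin (m+3) => M (s (k + 1 + 1 + ((j : ℕ) : ZMod (m+4))))).prod = (List.ofFn fun j : Fin (m+2) => M (s (k + 2 + ((j : ℕ) : ZMod (m+4))))).prod * _
    rw [prod_ofFn_last]
    congr 1
    · apply congrArg List.prod
      rw [List.ofFn_inj]
      funext j
      exact congrArg M (congrArg s (by push_cast [Fin.coe_castSucc]; ring))
    · exact congrArg M (congrArg s (by push_cast [Fin.val_last]; linear_combination h0))
  have hsplit : ∀ k, rest k = M (s (k+1)) * (Umid k * M (s (k-1))) := by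
    intro k; rw [hrf, hT]
  have hk1 : ∀ k : ZMod (m+4), k - 1 + 1 = k := fun k => by ring
  -- key pointwise identity
  have key : ∀ k, Matrix.trace (Fdef M (s k) * rest k)
      = Matrix.trace ((X * M (s k) - M (s k) * X) * rest k) := by
    intro k
    obtain ⟨pRL, pLL, pRR⟩ := hallow (k-1)
    rw [hk1 k] at pRL pLL pRR
    obtain ⟨qRL, qLL, qRR⟩ := hallow k
    rcases hb : s k with _ | _ | _
    · rw [h1]
    · -- s k = L : previous must be O, next is O or R
      have hprev : s (k-1) = Blk.O := by
        rcases hc : s (k-1) with _ | _ | _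
        · rfl
        · exact absurd hb (pLL hc)
        · exact absurd hb (pRL hc)
      rcases hc : s (k+1) with _ | _ | _
      · rw [hsplit k, hprev, hc]
        exact (sandwich_trace _ _ _ _ _ h2).symm
      · exact absurd hc (qLL hb)
      · rw [hsplit k, hprev, hc]
        exact (sandwich_trace _ _ _ _ _ h3).symm
    · -- s k = R : next must be O, previous is O or L
      have hnext : s (k+1) = Blk.O := by
        rcases hc : s (k+1) with _ | _ | _
        · rfl
        · exact absurd hc (qRL hb)
        · exact absurd hc (qRR hb)
      rcases hc : s (k-1) with _ | _ | _
      · rw [hsplit k, hnext, hc]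
        exact (sandwich_trace _ _ _ _ _ h4).symm
      · rw [hsplit k, hnext, hc]
        exact (sandwich_trace _ _ _ _ _ h5).symm
      · exact absurd hb (pRR hc)
  calc ∑ k : ZMod (m+4), Matrix.trace (Fdef M (s k) * rest k)
      = ∑ k : ZMod (m+4), Matrix.trace ((X * M (s k) - M (s k) * X) * rest k) :=
        Finset.sum_congr rfl fun k _ => key k
    _ = (∑ k : ZMod (m+4), Matrix.trace (X * (M (s k) * rest k)))
        - ∑ k : ZMod (m+4), Matrix.trace (X * (M (s (k+1)) * rest (k+1))) := by
        rw [← Finset.sum_sub_distrib]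
        refine Finset.sum_congr rfl fun k _ => ?_
        have e1 : (X * M (s k) - M (s k) * X) * rest k
            = X * (M (s k) * rest k) - M (s k) * X * rest k := by noncomm_ring
        rw [e1, Matrix.trace_sub]
        congr 1
        calc Matrix.trace (M (s k) * X * rest k)
            = Matrix.trace (rest k * M (s k) * X) := Matrix.trace_mul_cycle _ _ _
          _ = Matrix.trace (X * (rest k * M (s k))) := Matrix.trace_mul_comm _ _
          _ = Matrix.trace (X * (M (s (k+1)) * rest (k+1))) := by
              rw [hrf k, mul_assoc, ← hr2 k]
    _ = 0 := by
        rw [sub_eq_zero]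
        exact (Fintype.sum_equiv (Equiv.addRight (1 : ZMod (m+4)))
          (fun k => Matrix.trace (X * (M (s (k+1)) * rest (k+1))))
          (fun k => Matrix.trace (X * (M (s k) * rest k)))
          fun k => rfl).symm
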